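/- Let [Θ] be a set of N×N row-stochastic matrices with max_i sup_{V,K ∈ [Θ]} ‖V_i − K_i‖₁ ≤ ε. Then for any fixed initial distribution μ₀ and any t ≥ 0, any two distributions in the set M_t = { Θ_{t-1}ᵀ ⋯ Θ₀ᵀ μ₀ : Θ_s ∈ [Θ] } satisfy ‖μ − ν‖₁ ≤ t·ε. -/
import Mathlib


/-- The distribution at time `t` of a Markov chain with transition matrices `A s`. -/
def evolve {N : ℕ} (μ0 : Fin N → ℝ) (A : ℕ → Matrix (Fin N) (Fin N) ℝ) : ℕ → Fin N → ℝ
  | 0 => μ0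
  | t + 1 => fun j => ∑ i, A t i j * evolve μ0 A t i

lemma evolve_nonneg {N : ℕ} {S : Set (Matrix (Fin N) (Fin N) ℝ)}
    (hstoch : ∀ Θ ∈ S, ∀ i, (∀ j, 0 ≤ Θ i j) ∧ ∑ j, Θ i j = 1)
    {μ0 : Fin N → ℝ} (hμ0 : ∀ i, 0 ≤ μ0 i)
    {A : ℕ → Matrix (Fin N) (Fin N) ℝ} (hA : ∀ s, A s ∈ S) :
    ∀ t i, 0 ≤ evolve μ0 A t i := by
  intro t
  induction t with
  | zero => exact hμ0
  | succ t ih =>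
    intro j
    apply Finset.sum_nonneg
    intro i _
    exact mul_nonneg ((hstoch _ (hA t) i).1 j) (ih i)

lemma evolve_sum {N : ℕ} {S : Set (Matrix (Fin N) (Fin N) ℝ)}
    (hstoch : ∀ Θ ∈ S, ∀ i, (∀ j, 0 ≤ Θ i j) ∧ ∑ j, Θ i j = 1)
    {μ0 : Fin N → ℝ} (hμ0 : ∑ i, μ0 i = 1)
    {A : ℕ → Matrix (Fin N) (Fin N) ℝ} (hA : ∀ s, A s ∈ S) :
    ∀ t, ∑ i, evolve μ0 A t i = 1 := by
  intro t
  induction t with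
  | zero => exact hμ0
  | succ t ih =>
    show ∑ j, ∑ i, A t i j * evolve μ0 A t i = 1
    rw [Finset.sum_comm]
    calc ∑ i, ∑ j, A t i j * evolve μ0 A t i
        = ∑ i, (∑ j, A t i j) * evolve μ0 A t i := by
          simp [Finset.sum_mul]
      _ = ∑ i, evolve μ0 A t i := by
          refine Finset.sum_congr rfl fun i _ => ?_
          rw [(hstoch _ (hA t) i).2, one_mul]
      _ = 1 := ih

/-- If all rows of any two matrices in `[Θ]` are ε-close in ℓ¹, then any two
reachable distributions at time t are (t·ε)-close in ℓ¹. -/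
theorem tv_bound_reachable {N : ℕ} (S : Set (Matrix (Fin N) (Fin N) ℝ)) (ε : ℝ)
    (hstoch : ∀ Θ ∈ S, ∀ i, (∀ j, 0 ≤ Θ i j) ∧ ∑ j, Θ i j = 1)
    (hε : ∀ V ∈ S, ∀ K ∈ S, ∀ i, ∑ j, |V i j - K i j| ≤ ε)
    (μ0 : Fin N → ℝ) (hμ0 : (∀ i, 0 ≤ μ0 i) ∧ ∑ i, μ0 i = 1)
    (A B : ℕ → Matrix (Fin N) (Fin N) ℝ)
    (hA : ∀ s, A s ∈ S) (hB : ∀ s, B s ∈ S) (t : ℕ) :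
    ∑ k, |evolve μ0 A t k - evolve μ0 B t k| ≤ t * ε := by
  induction t with
  | zero => simp [evolve]
  | succ t ih =>
    set μ := evolve μ0 A t with hμ
    set ν := evolve μ0 B t with hν
    have hνn : ∀ i, 0 ≤ ν i := evolve_nonneg hstoch hμ0.1 hB t
    have hνs : ∑ i, ν i = 1 := evolve_sum hstoch hμ0.2 hB t
    have key : ∀ k, |evolve μ0 A (t+1) k - evolve μ0 B (t+1) k| ≤
        (∑ i, A t i k * |μ i - ν i|) + ∑ i, |A t i k - B t i k| * ν i := by
      intro k
      have h1 : evolve μ0 A (t+1) k - evolve μ0 B (t+1) k =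
          (∑ i, A t i k * (μ i - ν i)) + ∑ i, (A t i k - B t i k) * ν i := by
        show (∑ i, A t i k * μ i) - (∑ i, B t i k * ν i) = _
        rw [← Finset.sum_add_distrib, ← Finset.sum_sub_distrib]
        exact Finset.sum_congr rfl fun i _ => by ring
      rw [h1]
      refine le_trans (abs_add_le _ _) (add_le_add ?_ ?_)
      · refine le_trans (Finset.abs_sum_le_sum_abs _ _) ?_
        refine Finset.sum_le_sum fun i _ => ?_
        rw [abs_mul, abs_of_nonneg ((hstoch _ (hA t) i).1 k)]
      · refine le_trans (Finset.abs_sum_le_sum_abs _ _) ?_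
        refine Finset.sum_le_sum fun i _ => ?_
        rw [abs_mul, abs_of_nonneg (hνn i)]
    calc ∑ k, |evolve μ0 A (t+1) k - evolve μ0 B (t+1) k|
        ≤ ∑ k, ((∑ i, A t i k * |μ i - ν i|) + ∑ i, |A t i k - B t i k| * ν i) :=
          Finset.sum_le_sum fun k _ => key k
      _ = (∑ i, (∑ k, A t i k) * |μ i - ν i|) + ∑ i, (∑ k, |A t i k - B t i k|) * ν i := by
          rw [Finset.sum_add_distrib]
          congr 1
          · rw [Finset.sum_comm]; simp [Finset.sum_mul]
          · rw [Finset.sum_comm]; simp [Finset.sum_mul]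
      _ ≤ (∑ i, |μ i - ν i|) + ∑ i, ε * ν i := by
          refine add_le_add ?_ ?_
          · refine le_of_eq (Finset.sum_congr rfl fun i _ => ?_)
            rw [(hstoch _ (hA t) i).2, one_mul]
          · refine Finset.sum_le_sum fun i _ => ?_
            exact mul_le_mul_of_nonneg_right (hε _ (hA t) _ (hB t) i) (hνn i)
      _ = (∑ i, |μ i - ν i|) + ε := by rw [← Finset.mul_sum, hνs, mul_one]
      _ ≤ t * ε + ε := by linarith [ih]
      _ = (t + 1 : ℕ) * ε := by push_cast; ring
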